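/- If f ∈ x²/2 + x³·R[[x]] and g = ℒf is its Legendre transform, then g' ∘ f' = x as formal power series; in particular f' and g' are mutually inverse under composition. -/

import Mathlib

open PowerSeries

/-- Composition `f(g)` of formal power series, intended for `g` with zero constant term. -/
noncomputable def pscomp {R : Type*} [CommRing R] (f g : PowerSeries R) : PowerSeries R :=
  PowerSeries.mk fun n => ∑ k ∈ Finset.range (n + 1), coeff k f * coeff n (g ^ k)

/-!
Differentiating `g ∘ f' + f = X * f'` with the chain rule gives
`(g' ∘ f') * f'' + f' = X * f'' + f'`. Since `f''` has constant coefficient `2 * (1/2) = 1`,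
it is a unit, and cancelling it leaves `g' ∘ f' = X`.
-/

namespace PowerSeries

variable {R : Type*}

section CommSemiring

variable [CommSemiring R]

theorem coeff_pow_eq_zero_of_lt {g : R⟦X⟧} (hg : constantCoeff g = 0) {n k : ℕ} (hnk : n < k) :
    coeff n (g ^ k) = 0 :=
  X_pow_dvd_iff.mp (pow_dvd_pow_of_dvd (X_dvd_iff.mpr hg) k) n hnk

set_option linter.deprecated false in
theorem derivativeFun_eq_derivative (f : R⟦X⟧) : f.derivativeFun = d⁄dX R f := rfl

theorem constantCoeff_derivative (f : R⟦X⟧) : constantCoeff (d⁄dX R f) = coeff 1 f := by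
  simp [← coeff_zero_eq_constantCoeff_apply, coeff_derivative]

end CommSemiring

variable [CommRing R]

theorem pscomp_eq_subst (f : R⟦X⟧) {g : R⟦X⟧} (hg : constantCoeff g = 0) :
    pscomp f g = f.subst g := by
  ext n
  rw [pscomp, coeff_mk, coeff_subst' (.of_constantCoeff_zero' hg),
    finsum_eq_sum_of_support_subset _ (s := Finset.range (n + 1))]
  · simp only [smul_eq_mul]
  · intro k hk
    rw [Function.mem_support] at hk
    rw [Finset.coe_range, Set.mem_Iio, Nat.lt_succ_iff]
    by_contra! hnk
    exact hk (by rw [coeff_pow_eq_zero_of_lt hg hnk, smul_zero])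

theorem derivative_pscomp (f : R⟦X⟧) {g : R⟦X⟧} (hg : constantCoeff g = 0) :
    d⁄dX R (pscomp f g) = pscomp (d⁄dX R f) g * d⁄dX R g := by
  rw [pscomp_eq_subst _ hg, pscomp_eq_subst _ hg, derivative_subst (.of_constantCoeff_zero' hg)]

theorem isUnit_derivative_derivative [Algebra ℚ R] {f : R⟦X⟧}
    (hf2 : coeff 2 f = algebraMap ℚ R (1 / 2)) : IsUnit (d⁄dX R (d⁄dX R f)) := by
  have hconst : constantCoeff (d⁄dX R (d⁄dX R f)) = 1 := by
    rw [constantCoeff_derivative, coeff_derivative, hf2,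
      show ((1 : ℕ) : R) + 1 = algebraMap ℚ R 2 by rw [map_ofNat]; norm_num, ← map_mul]
    norm_num
  rw [isUnit_iff_constantCoeff, hconst]
  exact isUnit_one

end PowerSeries

theorem legendre_deriv_inverse_general {R : Type*} [CommRing R] [Algebra ℚ R]
    (f g : PowerSeries R)
    (hf1 : coeff 1 f = 0)
    (hf2 : coeff 2 f = algebraMap ℚ R (1 / 2))
    (h : pscomp g f.derivativeFun + f = X * f.derivativeFun) :
    pscomp g.derivativeFun f.derivativeFun = X := by
  simp only [derivativeFun_eq_derivative] at h ⊢
  have hf'0 : constantCoeff (d⁄dX R f) = 0 := by rw [constantCoeff_derivative, hf1]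
  have hd := congrArg (d⁄dX R) h
  rw [map_add, derivative_pscomp _ hf'0, Derivation.leibniz, derivative_X, smul_eq_mul,
    smul_eq_mul, mul_one] at hd
  exact (isUnit_derivative_derivative hf2).mul_right_cancel (add_right_cancel hd)

/-- If `f ∈ x²/2 + x³·R[[x]]` and `g = ℒf` is its Legendre transform (characterized by
`g ∘ f' + f = x·f'`), then `g' ∘ f' = x`: the derivatives are mutually inverse under
composition. -/
theorem legendre_deriv_inverse {R : Type*} [CommRing R] [Algebra ℚ R]
    (f g : PowerSeries R)
    (hf0 : coeff 0 f = 0) (hf1 : coeff 1 f = 0)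
    (hf2 : coeff 2 f = algebraMap ℚ R (1 / 2))
    (hg0 : coeff 0 g = 0) (hg1 : coeff 1 g = 0)
    (hg2 : coeff 2 g = algebraMap ℚ R (1 / 2))
    (h : pscomp g f.derivativeFun + f = X * f.derivativeFun) :
    pscomp g.derivativeFun f.derivativeFun = X :=
  legendre_deriv_inverse_general f g hf1 hf2 h
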